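/- On a group of Heisenberg type (i.e., -J_μ² = |μ|²I for all μ), the Hamiltonian flow starting at the origin with covector (ξ,μ), ξ≠0, μ≠0, satisfies, with θ = t|μ|/(2|ξ|), μ̄ = μ/|μ|, ξ̄ = ξ/|ξ|: xᵗ = t (sin θ/θ)(cos θ · I + sin θ · J_{μ̄}) ξ̄, ξᵗ = cos θ (cos θ · I + sin θ · J_{μ̄}) ξ, and uᵗ = (t²/(4θ))(1 - (sin θ/θ) cos θ) μ̄. -/

import Mathlib

/-!
Since `ℋ` does not depend on `u`, `μ` is constant, and along the flow the vector
`p = ξ + J_μ x / 2` (with `ℋ = |p|`) satisfies `ṗ = J_μ p / |p|`. As `J_μ` is skew, `|p|` is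
conserved, so `|p| = |ξ₀|` and `p(t) = exp(ω t J_μ̄) ξ₀` with `ω = |μ|/|ξ₀|`, because
`J_μ̄² = -1`. Integrating `ẋ = p / |ξ₀|` gives `x`, and `ξ = p - J_μ x / 2`. Finally
`u̇_j = ⟨p, J_{e_j} x⟩ / (2|ξ₀|)`, and polarising the H-type identity to
`J_μ J_ν + J_ν J_μ = -2⟨μ, ν⟩ I` evaluates this pairing as
`⟨μ̄, e_j⟩ |ξ₀|² (1 - cos ωt) / |μ|`, so `u̇` is a multiple of `μ̄`.
-/

open Matrix Function

/-- The (1-homogeneous) Hamiltonian `ℋ(x, u, ξ, μ) = |ξ + J_μ x / 2|`; it is independent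
of `u`, but `u` is kept as a formal argument. -/
noncomputable def sqrtHam {d₁ d₂ : ℕ} (J : (Fin d₂ → ℝ) →ₗ[ℝ] Matrix (Fin d₁) (Fin d₁) ℝ)
    (x : Fin d₁ → ℝ) (_u : Fin d₂ → ℝ) (ξ : Fin d₁ → ℝ) (μ : Fin d₂ → ℝ) : ℝ :=
  Real.sqrt ((ξ + (1 / 2 : ℝ) • (J μ).mulVec x) ⬝ᵥ (ξ + (1 / 2 : ℝ) • (J μ).mulVec x))

open Real

section Calculus

variable {E F : Type*} [NormedAddCommGroup E] [NormedSpace ℝ E] [FiniteDimensional ℝ E]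
  [NormedAddCommGroup F] [NormedSpace ℝ F]

theorem LinearMap.hasDerivAt_comp (L : E →ₗ[ℝ] F) {f : ℝ → E} {f' : E} {t : ℝ}
    (hf : HasDerivAt f f' t) : HasDerivAt (fun s => L (f s)) (L f') t :=
  L.toContinuousLinearMap.hasFDerivAt.comp_hasDerivAt t hf

theorem eq_of_hasDerivAt_eq {f g f' : ℝ → F} (hf : ∀ t, HasDerivAt f (f' t) t)
    (hg : ∀ t, HasDerivAt g (f' t) t) (h0 : f 0 = g 0) : f = g :=
  eq_of_fderiv_eq (fun t => (hf t).differentiableAt) (fun t => (hg t).differentiableAt)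
    (fun t => by rw [(hf t).hasFDerivAt.fderiv, (hg t).hasFDerivAt.fderiv]) 0 h0

theorem eq_of_hasDerivAt_zero {f : ℝ → F} (hf : ∀ t, HasDerivAt f 0 t) (t : ℝ) : f t = f 0 :=
  is_const_of_deriv_eq_zero (fun s => (hf s).differentiableAt) (fun s => (hf s).deriv) t 0

variable {ι : Type*} [Fintype ι]

theorem dotProduct_self_pos {v : ι → ℝ} (hv : v ≠ 0) : 0 < v ⬝ᵥ v :=
  (Finset.sum_nonneg fun i _ => mul_self_nonneg (v i)).lt_of_ne
    (Ne.symm (dotProduct_self_eq_zero.not.2 hv))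

theorem inv_sqrt_smul_dotProduct_self {v : ι → ℝ} (hv : v ≠ 0) :
    ((√(v ⬝ᵥ v))⁻¹ • v) ⬝ᵥ ((√(v ⬝ᵥ v))⁻¹ • v) = 1 := by
  have hpos := dotProduct_self_pos hv
  rw [smul_dotProduct, dotProduct_smul, smul_smul, smul_eq_mul, ← mul_inv, mul_self_sqrt hpos.le,
    inv_mul_cancel₀ hpos.ne']

theorem HasDerivAt.dotProduct {f g : ℝ → ι → ℝ} {f' g' : ι → ℝ} {t : ℝ}
    (hf : HasDerivAt f f' t) (hg : HasDerivAt g g' t) :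
    HasDerivAt (fun s => f s ⬝ᵥ g s) (f' ⬝ᵥ g t + f t ⬝ᵥ g') t := by
  refine (HasDerivAt.fun_sum (u := Finset.univ) fun i _ =>
    (hasDerivAt_pi.1 hf i).mul (hasDerivAt_pi.1 hg i)).congr_deriv ?_
  rw [Finset.sum_add_distrib]; rfl

theorem HasDerivAt.sqrt_dotProduct_self {f : ℝ → ι → ℝ} {f' : ι → ℝ} {t : ℝ}
    (hf : HasDerivAt f f' t) (ht : f t ≠ 0) :
    HasDerivAt (fun s => √(f s ⬝ᵥ f s)) (f t ⬝ᵥ f' / √(f t ⬝ᵥ f t)) t := by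
  refine ((hf.dotProduct hf).sqrt (dotProduct_self_pos ht).ne').congr_deriv ?_
  rw [dotProduct_comm f']
  ring

end Calculus

section SkewMatrix

variable {ι : Type*} [Fintype ι] {A B M : Matrix ι ι ℝ}

theorem dotProduct_mulVec_self_of_transpose_eq_neg (hM : Mᵀ = -M) (w : ι → ℝ) :
    w ⬝ᵥ (M *ᵥ w) = 0 := by
  have h := dotProduct_transpose_mulVec M w w
  rw [hM, neg_mulVec, dotProduct_neg] at h
  linarith

variable [DecidableEq ι]

theorem dotProduct_mulVec_single_of_transpose_eq_neg (hM : Mᵀ = -M) (w : ι → ℝ) (i : ι) :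
    w ⬝ᵥ (M *ᵥ Pi.single i 1) = -(M *ᵥ w) i := by
  rw [← dotProduct_transpose_mulVec, hM, neg_mulVec, single_dotProduct, one_mul, Pi.neg_apply]

theorem mulVec_dotProduct_mulVec_of_anticomm (hA : Aᵀ = -A) (hB : Bᵀ = -B) {m : ℝ}
    (hAB : A * B + B * A = -((2 * m) • 1)) (w : ι → ℝ) :
    (A *ᵥ w) ⬝ᵥ (B *ᵥ w) = m * (w ⬝ᵥ w) := by
  have hsum : w ⬝ᵥ ((A * B + B * A) *ᵥ w) = -(2 * m * (w ⬝ᵥ w)) := by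
    rw [hAB, neg_mulVec, smul_mulVec, one_mulVec, dotProduct_neg, dotProduct_smul, smul_eq_mul]
  have hAB' : (A *ᵥ w) ⬝ᵥ (B *ᵥ w) = -(w ⬝ᵥ ((A * B) *ᵥ w)) := by
    rw [dotProduct_comm, ← dotProduct_transpose_mulVec, hA, neg_mulVec, dotProduct_neg,
      mulVec_mulVec]
  have hBA' : (A *ᵥ w) ⬝ᵥ (B *ᵥ w) = -(w ⬝ᵥ ((B * A) *ᵥ w)) := by
    rw [← dotProduct_transpose_mulVec, hB, neg_mulVec, dotProduct_neg, mulVec_mulVec]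
  rw [add_mulVec, dotProduct_add] at hsum
  linarith

theorem smul_add_smul_mulVec_dotProduct_of_anticomm (hA : Aᵀ = -A) (hB : Bᵀ = -B) {m : ℝ}
    (hAB : A * B + B * A = -((2 * m) • 1)) (w : ι → ℝ) (a b c d : ℝ) :
    (a • w + b • (A *ᵥ w)) ⬝ᵥ (B *ᵥ (c • w + d • (A *ᵥ w))) =
      m * (b * c - a * d) * (w ⬝ᵥ w) := by
  have hBA : w ⬝ᵥ (B *ᵥ (A *ᵥ w)) = -(m * (w ⬝ᵥ w)) := by
    rw [← dotProduct_transpose_mulVec, hB, neg_mulVec, dotProduct_neg,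
      mulVec_dotProduct_mulVec_of_anticomm hA hB hAB]
  simp only [mulVec_add, mulVec_smul, add_dotProduct, dotProduct_add, smul_dotProduct,
    dotProduct_smul, smul_eq_mul, dotProduct_mulVec_self_of_transpose_eq_neg hB,
    mulVec_dotProduct_mulVec_of_anticomm hA hB hAB, hBA]
  ring

end SkewMatrix

theorem mul_add_mul_swap_eq_of_mul_self_eq {ι κ : Type*} [Fintype ι] [DecidableEq ι]
    [Fintype κ] {J : (κ → ℝ) →ₗ[ℝ] Matrix ι ι ℝ}
    (hHtype : ∀ μ : κ → ℝ, J μ * J μ = -((μ ⬝ᵥ μ) • (1 : Matrix ι ι ℝ)))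
    (μ ν : κ → ℝ) : J μ * J ν + J ν * J μ = -((2 * (μ ⬝ᵥ ν)) • 1) := by
  have hdot : (μ + ν) ⬝ᵥ (μ + ν) = μ ⬝ᵥ μ + 2 * (μ ⬝ᵥ ν) + ν ⬝ᵥ ν := by
    simp only [add_dotProduct, dotProduct_add, dotProduct_comm ν μ]
    ring
  calc J μ * J ν + J ν * J μ = J (μ + ν) * J (μ + ν) - J μ * J μ - J ν * J ν := by
        rw [map_add]
        noncomm_ring
    _ = -((2 * (μ ⬝ᵥ ν)) • 1) := by
        rw [hHtype, hHtype, hHtype, hdot]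
        module

theorem eq_cos_smul_add_sin_smul_of_hasDerivAt {ι : Type*} [Fintype ι] [DecidableEq ι]
    {A : Matrix ι ι ℝ} (hA : A * A = -1) {ω : ℝ} {V : ℝ → ι → ℝ}
    (hV : ∀ t, HasDerivAt V (ω • (A *ᵥ V t)) t) (t : ℝ) :
    V t = cos (ω * t) • V 0 + sin (ω * t) • (A *ᵥ V 0) := by
  have hAV : ∀ s, HasDerivAt (fun s => A *ᵥ V s) (-(ω • V s)) s := fun s => by
    refine ((mulVecLin A).hasDerivAt_comp (hV s)).congr_deriv ?_
    rw [mulVecLin_apply, mulVec_smul, mulVec_mulVec, hA, neg_mulVec, one_mulVec, smul_neg]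
  -- `exp (-ω s A) (V s)` is constant
  have hW : ∀ s, HasDerivAt (fun s => cos (ω * s) • V s - sin (ω * s) • (A *ᵥ V s)) 0 s :=
    fun s => by
      refine ((((hasDerivAt_const_mul ω).cos).smul (hV s)).sub
        (((hasDerivAt_const_mul ω).sin).smul (hAV s))).congr_deriv ?_
      simp only [smul_smul, smul_neg]
      module
  have hWt := eq_of_hasDerivAt_zero hW t
  simp only [mul_zero, cos_zero, sin_zero, one_smul, zero_smul, sub_zero] at hWt
  calc V t = cos (ω * t) • (cos (ω * t) • V t - sin (ω * t) • (A *ᵥ V t))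
        + sin (ω * t) • (A *ᵥ (cos (ω * t) • V t - sin (ω * t) • (A *ᵥ V t))) := by
        rw [mulVec_sub, mulVec_smul, mulVec_smul, mulVec_mulVec, hA, neg_mulVec, one_mulVec]
        match_scalars
        · linear_combination -sin_sq_add_cos_sq (ω * t)
        · ring
    _ = cos (ω * t) • V 0 + sin (ω * t) • (A *ᵥ V 0) := by rw [hWt]

section Hamiltonian

variable {d₁ d₂ : ℕ} (J : (Fin d₂ → ℝ) →ₗ[ℝ] Matrix (Fin d₁) (Fin d₁) ℝ)

noncomputable def hamMomentum (x ξ : Fin d₁ → ℝ) (μ : Fin d₂ → ℝ) : Fin d₁ → ℝ :=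
  ξ + (1 / 2 : ℝ) • (J μ *ᵥ x)

theorem hamMomentum_zero_left (ξ : Fin d₁ → ℝ) (μ : Fin d₂ → ℝ) : hamMomentum J 0 ξ μ = ξ := by
  rw [hamMomentum, mulVec_zero, smul_zero, add_zero]

variable {J} {x ξ : Fin d₁ → ℝ} {u μ : Fin d₂ → ℝ}

theorem hasDerivAt_sqrtHam_update_ξ (h : hamMomentum J x ξ μ ≠ 0) (i : Fin d₁) :
    HasDerivAt (fun a => sqrtHam J x u (update ξ i a) μ)
      (hamMomentum J x ξ μ i / √(hamMomentum J x ξ μ ⬝ᵥ hamMomentum J x ξ μ)) (ξ i) := by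
  have hf : HasDerivAt (fun a => hamMomentum J x (update ξ i a) μ) (Pi.single i 1) (ξ i) :=
    (hasDerivAt_update ξ i (ξ i)).add_const _
  have h' := hf.sqrt_dotProduct_self (by rwa [update_eq_self])
  rwa [update_eq_self, dotProduct_single, mul_one] at h'

theorem hasDerivAt_sqrtHam_update_x (hskew : (J μ)ᵀ = -J μ) (h : hamMomentum J x ξ μ ≠ 0)
    (i : Fin d₁) :
    HasDerivAt (fun a => sqrtHam J (update x i a) u ξ μ)
      (-(J μ *ᵥ hamMomentum J x ξ μ) i /
        (2 * √(hamMomentum J x ξ μ ⬝ᵥ hamMomentum J x ξ μ))) (x i) := by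
  have hf : HasDerivAt (fun a => hamMomentum J (update x i a) ξ μ)
      ((1 / 2 : ℝ) • (J μ *ᵥ Pi.single i 1)) (x i) :=
    (((mulVecLin (J μ)).hasDerivAt_comp (hasDerivAt_update x i (x i))).fun_const_smul _).const_add ξ
  have h' := hf.sqrt_dotProduct_self (by rwa [update_eq_self])
  rw [update_eq_self, dotProduct_smul, dotProduct_mulVec_single_of_transpose_eq_neg hskew,
    smul_eq_mul] at h'
  exact h'.congr_deriv (by ring)

theorem hasDerivAt_sqrtHam_update_μ (h : hamMomentum J x ξ μ ≠ 0) (j : Fin d₂) :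
    HasDerivAt (fun a => sqrtHam J x u ξ (update μ j a))
      (hamMomentum J x ξ μ ⬝ᵥ (J (Pi.single j 1) *ᵥ x) /
        (2 * √(hamMomentum J x ξ μ ⬝ᵥ hamMomentum J x ξ μ))) (μ j) := by
  have hf : HasDerivAt (fun a => hamMomentum J x ξ (update μ j a))
      ((1 / 2 : ℝ) • (J (Pi.single j 1) *ᵥ x)) (μ j) :=
    ((((toLin' : Matrix (Fin d₁) (Fin d₁) ℝ ≃ₗ[ℝ] _).toLinearMap ∘ₗ J).flip x).hasDerivAt_comp
      (hasDerivAt_update μ j (μ j))).fun_const_smul _ |>.const_add ξ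
  have h' := hf.sqrt_dotProduct_self (by rwa [update_eq_self])
  rw [update_eq_self, dotProduct_smul, smul_eq_mul] at h'
  exact h'.congr_deriv (by ring)

end Hamiltonian

section HamiltonFlow

variable {d₁ d₂ : ℕ}

structure IsHamiltonFlow (J : (Fin d₂ → ℝ) →ₗ[ℝ] Matrix (Fin d₁) (Fin d₁) ℝ)
    (x : ℝ → Fin d₁ → ℝ) (u : ℝ → Fin d₂ → ℝ) (ξ : ℝ → Fin d₁ → ℝ) (μ : ℝ → Fin d₂ → ℝ) :
    Prop where
  hasDerivAt_x_apply : ∀ (t : ℝ) (i : Fin d₁), HasDerivAt (fun s => x s i)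
    (deriv (fun a => sqrtHam J (x t) (u t) (update (ξ t) i a) (μ t)) (ξ t i)) t
  hasDerivAt_u_apply : ∀ (t : ℝ) (j : Fin d₂), HasDerivAt (fun s => u s j)
    (deriv (fun a => sqrtHam J (x t) (u t) (ξ t) (update (μ t) j a)) (μ t j)) t
  hasDerivAt_ξ_apply : ∀ (t : ℝ) (i : Fin d₁), HasDerivAt (fun s => ξ s i)
    (-(deriv (fun a => sqrtHam J (update (x t) i a) (u t) (ξ t) (μ t)) (x t i))) t
  hasDerivAt_μ_apply : ∀ (t : ℝ) (j : Fin d₂), HasDerivAt (fun s => μ s j)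
    (-(deriv (fun a => sqrtHam J (x t) (update (u t) j a) (ξ t) (μ t)) (u t j))) t

namespace IsHamiltonFlow

variable {J : (Fin d₂ → ℝ) →ₗ[ℝ] Matrix (Fin d₁) (Fin d₁) ℝ} {x ξ : ℝ → Fin d₁ → ℝ}
  {u μ : ℝ → Fin d₂ → ℝ}

theorem μ_eq (hF : IsHamiltonFlow J x u ξ μ) (t : ℝ) : μ t = μ 0 := by
  have hμ : ∀ s, HasDerivAt μ 0 s := fun s => hasDerivAt_pi.2 fun j => by
    have h := hF.hasDerivAt_μ_apply s j
    rwa [show (fun a => sqrtHam J (x s) (update (u s) j a) (ξ s) (μ s)) =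
      fun _ => sqrtHam J (x s) (u s) (ξ s) (μ s) from rfl, deriv_const, neg_zero] at h
  exact eq_of_hasDerivAt_zero hμ t

theorem momentum_fun_eq (hF : IsHamiltonFlow J x u ξ μ) :
    (fun s => hamMomentum J (x s) (ξ s) (μ s)) = fun s => ξ s + (1 / 2 : ℝ) • (J (μ 0) *ᵥ x s) :=
  funext fun s => by rw [hamMomentum, hF.μ_eq s]

theorem differentiableAt_momentum (hF : IsHamiltonFlow J x u ξ μ) (t : ℝ) :
    DifferentiableAt ℝ (fun s => hamMomentum J (x s) (ξ s) (μ s)) t := by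
  have hx : DifferentiableAt ℝ x t := (hasDerivAt_pi.2 (hF.hasDerivAt_x_apply t)).differentiableAt
  have hξ : DifferentiableAt ℝ ξ t := (hasDerivAt_pi.2 (hF.hasDerivAt_ξ_apply t)).differentiableAt
  rw [hF.momentum_fun_eq]
  exact (hξ.hasDerivAt.add
    (((mulVecLin (J (μ 0))).hasDerivAt_comp hx.hasDerivAt).fun_const_smul _)).differentiableAt

variable {t : ℝ}

theorem hasDerivAt_x (hF : IsHamiltonFlow J x u ξ μ)
    (ht : hamMomentum J (x t) (ξ t) (μ t) ≠ 0) :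
    HasDerivAt x ((√(hamMomentum J (x t) (ξ t) (μ t) ⬝ᵥ hamMomentum J (x t) (ξ t) (μ t)))⁻¹ •
      hamMomentum J (x t) (ξ t) (μ t)) t :=
  hasDerivAt_pi.2 fun i => (hF.hasDerivAt_x_apply t i).congr_deriv <| by
    rw [(hasDerivAt_sqrtHam_update_ξ ht i).deriv, Pi.smul_apply, smul_eq_mul, div_eq_inv_mul]

theorem hasDerivAt_ξ (hF : IsHamiltonFlow J x u ξ μ) (hskew : ∀ ν, (J ν)ᵀ = -J ν)
    (ht : hamMomentum J (x t) (ξ t) (μ t) ≠ 0) :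
    HasDerivAt ξ ((2 * √(hamMomentum J (x t) (ξ t) (μ t) ⬝ᵥ hamMomentum J (x t) (ξ t) (μ t)))⁻¹ •
      (J (μ t) *ᵥ hamMomentum J (x t) (ξ t) (μ t))) t :=
  hasDerivAt_pi.2 fun i => (hF.hasDerivAt_ξ_apply t i).congr_deriv <| by
    rw [(hasDerivAt_sqrtHam_update_x (hskew _) ht i).deriv, Pi.smul_apply, smul_eq_mul,
      neg_div, neg_neg, div_eq_inv_mul]

theorem hasDerivAt_u (hF : IsHamiltonFlow J x u ξ μ)
    (ht : hamMomentum J (x t) (ξ t) (μ t) ≠ 0) :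
    HasDerivAt u (fun j => hamMomentum J (x t) (ξ t) (μ t) ⬝ᵥ (J (Pi.single j 1) *ᵥ x t) /
      (2 * √(hamMomentum J (x t) (ξ t) (μ t) ⬝ᵥ hamMomentum J (x t) (ξ t) (μ t)))) t :=
  hasDerivAt_pi.2 fun j => (hF.hasDerivAt_u_apply t j).congr_deriv
    (hasDerivAt_sqrtHam_update_μ ht j).deriv

theorem hasDerivAt_momentum (hF : IsHamiltonFlow J x u ξ μ) (hskew : ∀ ν, (J ν)ᵀ = -J ν)
    (ht : hamMomentum J (x t) (ξ t) (μ t) ≠ 0) :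
    HasDerivAt (fun s => hamMomentum J (x s) (ξ s) (μ s))
      ((√(hamMomentum J (x t) (ξ t) (μ t) ⬝ᵥ hamMomentum J (x t) (ξ t) (μ t)))⁻¹ •
        (J (μ 0) *ᵥ hamMomentum J (x t) (ξ t) (μ t))) t := by
  rw [hF.momentum_fun_eq]
  refine ((hF.hasDerivAt_ξ hskew ht).add
    (((mulVecLin (J (μ 0))).hasDerivAt_comp (hF.hasDerivAt_x ht)).fun_const_smul _)).congr_deriv ?_
  rw [mulVecLin_apply, mulVec_smul, hF.μ_eq t, mul_inv, smul_smul]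
  module

theorem momentum_dotProduct_self (hF : IsHamiltonFlow J x u ξ μ) (hskew : ∀ ν, (J ν)ᵀ = -J ν)
    (t : ℝ) : hamMomentum J (x t) (ξ t) (μ t) ⬝ᵥ hamMomentum J (x t) (ξ t) (μ t) =
      hamMomentum J (x 0) (ξ 0) (μ 0) ⬝ᵥ hamMomentum J (x 0) (ξ 0) (μ 0) := by
  refine eq_of_hasDerivAt_zero
    (f := fun s => hamMomentum J (x s) (ξ s) (μ s) ⬝ᵥ hamMomentum J (x s) (ξ s) (μ s))
    (fun s => ?_) t
  -- where `p` vanishes Hamilton's equations only give junk values, but `p ⬝ᵥ ṗ = 0` regardless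
  by_cases hs : hamMomentum J (x s) (ξ s) (μ s) = 0
  · have hd := (hF.differentiableAt_momentum s).hasDerivAt
    simpa [hs] using hd.dotProduct hd
  · have hd := hF.hasDerivAt_momentum hskew hs
    refine (hd.dotProduct hd).congr_deriv ?_
    rw [smul_dotProduct, dotProduct_smul, dotProduct_comm (J (μ 0) *ᵥ _),
      dotProduct_mulVec_self_of_transpose_eq_neg (hskew _), smul_zero, add_zero]

theorem sqrt_momentum_dotProduct_self (hF : IsHamiltonFlow J x u ξ μ)
    (hskew : ∀ ν, (J ν)ᵀ = -J ν) (hx0 : x 0 = 0) (t : ℝ) :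
    √(hamMomentum J (x t) (ξ t) (μ t) ⬝ᵥ hamMomentum J (x t) (ξ t) (μ t)) = √(ξ 0 ⬝ᵥ ξ 0) := by
  rw [hF.momentum_dotProduct_self hskew, hx0, hamMomentum_zero_left]

theorem momentum_ne_zero (hF : IsHamiltonFlow J x u ξ μ) (hskew : ∀ ν, (J ν)ᵀ = -J ν)
    (hx0 : x 0 = 0) (hξ0 : ξ 0 ≠ 0) (t : ℝ) : hamMomentum J (x t) (ξ t) (μ t) ≠ 0 := by
  intro h
  have := hF.momentum_dotProduct_self hskew t
  rw [h, hx0, hamMomentum_zero_left, zero_dotProduct, eq_comm, dotProduct_self_eq_zero] at this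
  exact hξ0 this

variable {e : Fin d₂ → ℝ} {a : ℝ}

theorem momentum_eq (hF : IsHamiltonFlow J x u ξ μ) (hskew : ∀ ν, (J ν)ᵀ = -J ν)
    (hA : J e * J e = -1) (hμ0 : μ 0 = a • e) (hx0 : x 0 = 0) (hξ0 : ξ 0 ≠ 0) (t : ℝ) :
    hamMomentum J (x t) (ξ t) (μ t) = cos (a / √(ξ 0 ⬝ᵥ ξ 0) * t) • ξ 0 +
      sin (a / √(ξ 0 ⬝ᵥ ξ 0) * t) • (J e *ᵥ ξ 0) := by
  have h := eq_cos_smul_add_sin_smul_of_hasDerivAt hA (ω := a / √(ξ 0 ⬝ᵥ ξ 0))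
    (V := fun s => hamMomentum J (x s) (ξ s) (μ s)) (fun s =>
      (hF.hasDerivAt_momentum hskew (hF.momentum_ne_zero hskew hx0 hξ0 s)).congr_deriv (by
        rw [hF.sqrt_momentum_dotProduct_self hskew hx0, hμ0, map_smul, smul_mulVec, smul_smul,
          div_eq_inv_mul])) t
  rwa [hx0, hamMomentum_zero_left] at h

theorem x_eq (hF : IsHamiltonFlow J x u ξ μ) (hskew : ∀ ν, (J ν)ᵀ = -J ν)
    (hA : J e * J e = -1) (hμ0 : μ 0 = a • e) (hx0 : x 0 = 0) (hξ0 : ξ 0 ≠ 0) (ha : a ≠ 0)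
    (t : ℝ) : x t = (sin (a / √(ξ 0 ⬝ᵥ ξ 0) * t) / a) • ξ 0 +
      ((1 - cos (a / √(ξ 0 ⬝ᵥ ξ 0) * t)) / a) • (J e *ᵥ ξ 0) := by
  have hc : √(ξ 0 ⬝ᵥ ξ 0) ≠ 0 := (sqrt_pos.2 (dotProduct_self_pos hξ0)).ne'
  refine congrFun (eq_of_hasDerivAt_eq
    (fun s => hF.hasDerivAt_x (hF.momentum_ne_zero hskew hx0 hξ0 s))
    (fun s => ((((hasDerivAt_const_mul _).sin.div_const a).smul_const (ξ 0)).add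
      ((((hasDerivAt_const_mul _).cos.const_sub 1).div_const a).smul_const _)).congr_deriv ?_)
    (by simp [hx0])) t
  rw [hF.sqrt_momentum_dotProduct_self hskew hx0, hF.momentum_eq hskew hA hμ0 hx0 hξ0]
  match_scalars <;> field_simp

theorem ξ_eq (hF : IsHamiltonFlow J x u ξ μ) (hskew : ∀ ν, (J ν)ᵀ = -J ν)
    (hA : J e * J e = -1) (hμ0 : μ 0 = a • e) (hx0 : x 0 = 0) (hξ0 : ξ 0 ≠ 0) (ha : a ≠ 0)
    (t : ℝ) : ξ t = ((1 + cos (a / √(ξ 0 ⬝ᵥ ξ 0) * t)) / 2) • ξ 0 +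
      (sin (a / √(ξ 0 ⬝ᵥ ξ 0) * t) / 2) • (J e *ᵥ ξ 0) := by
  have hξ : ξ t = hamMomentum J (x t) (ξ t) (μ t) - (1 / 2 : ℝ) • (J (μ t) *ᵥ x t) := by
    rw [hamMomentum, add_sub_cancel_right]
  rw [hξ, hF.momentum_eq hskew hA hμ0 hx0 hξ0, hF.μ_eq, hμ0, hF.x_eq hskew hA hμ0 hx0 hξ0 ha,
    map_smul, smul_mulVec, mulVec_add, mulVec_smul, mulVec_smul, mulVec_mulVec, hA, neg_mulVec,
    one_mulVec]
  match_scalars <;> field_simp <;> ring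

theorem u_eq (hF : IsHamiltonFlow J x u ξ μ) (hskew : ∀ ν, (J ν)ᵀ = -J ν)
    (hHtype : ∀ ν : Fin d₂ → ℝ, J ν * J ν = -((ν ⬝ᵥ ν) • (1 : Matrix (Fin d₁) (Fin d₁) ℝ)))
    (he : e ⬝ᵥ e = 1) (hμ0 : μ 0 = a • e) (hx0 : x 0 = 0) (hu0 : u 0 = 0) (hξ0 : ξ 0 ≠ 0)
    (ha : a ≠ 0) (t : ℝ) :
    u t = (√(ξ 0 ⬝ᵥ ξ 0) / (2 * a) *
      (t - √(ξ 0 ⬝ᵥ ξ 0) / a * sin (a / √(ξ 0 ⬝ᵥ ξ 0) * t))) • e := by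
  have hA : J e * J e = -1 := by rw [hHtype, he, one_smul]
  have hpos := dotProduct_self_pos hξ0
  have hc0 : √(ξ 0 ⬝ᵥ ξ 0) ≠ 0 := (sqrt_pos.2 hpos).ne'
  have hdot : ∀ s (ν : Fin d₂ → ℝ), hamMomentum J (x s) (ξ s) (μ s) ⬝ᵥ (J ν *ᵥ x s) =
      (e ⬝ᵥ ν) * ((1 - cos (a / √(ξ 0 ⬝ᵥ ξ 0) * s)) / a) * (√(ξ 0 ⬝ᵥ ξ 0) * √(ξ 0 ⬝ᵥ ξ 0)) := by
    intro s ν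
    rw [hF.momentum_eq hskew hA hμ0 hx0 hξ0, hF.x_eq hskew hA hμ0 hx0 hξ0 ha,
      smul_add_smul_mulVec_dotProduct_of_anticomm (hskew e) (hskew ν)
        (mul_add_mul_swap_eq_of_mul_self_eq hHtype e ν), mul_self_sqrt hpos.le]
    linear_combination (e ⬝ᵥ ν) * (ξ 0 ⬝ᵥ ξ 0) / a * sin_sq_add_cos_sq (a / √(ξ 0 ⬝ᵥ ξ 0) * s)
  refine congrFun (eq_of_hasDerivAt_eq
    (fun s => hF.hasDerivAt_u (hF.momentum_ne_zero hskew hx0 hξ0 s))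
    (fun s => ((((hasDerivAt_id s).sub ((hasDerivAt_const_mul _).sin.const_mul _)).const_mul
      _).smul_const e).congr_deriv ?_) (by simp [hu0])) t
  funext j
  rw [hdot, hF.sqrt_momentum_dotProduct_self hskew hx0, dotProduct_single, mul_one,
    Pi.smul_apply, smul_eq_mul]
  field_simp

end IsHamiltonFlow

end HamiltonFlow

/-- On a group of Heisenberg type (i.e. `-J_μ² = |μ|² I` for all `μ`),
any solution of Hamilton's equations for `ℋ = |ξ + J_μ x/2|` starting at the origin with
covector `(ξ₀, μ₀)`, `ξ₀ ≠ 0`, `μ₀ ≠ 0`, satisfies, with `θ = t|μ₀|/(2|ξ₀|)`,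
`μ̄ = μ₀/|μ₀|`, `ξ̄ = ξ₀/|ξ₀|`:
`xᵗ = t (sin θ/θ)(cos θ · I + sin θ · J_μ̄) ξ̄`,
`ξᵗ = cos θ (cos θ · I + sin θ · J_μ̄) ξ₀`, and
`uᵗ = (t²/(4θ))(1 - (sin θ/θ) cos θ) μ̄`. -/
theorem statement14 {d₁ d₂ : ℕ}
    (J : (Fin d₂ → ℝ) →ₗ[ℝ] Matrix (Fin d₁) (Fin d₁) ℝ)
    (hskew : ∀ μ, (J μ)ᵀ = -(J μ))
    (hHtype : ∀ μ : Fin d₂ → ℝ,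
      J μ * J μ = -((μ ⬝ᵥ μ) • (1 : Matrix (Fin d₁) (Fin d₁) ℝ)))
    (x : ℝ → Fin d₁ → ℝ) (u : ℝ → Fin d₂ → ℝ)
    (ξ : ℝ → Fin d₁ → ℝ) (μ : ℝ → Fin d₂ → ℝ)
    (ξ₀ : Fin d₁ → ℝ) (μ₀ : Fin d₂ → ℝ) (hξ₀ : ξ₀ ≠ 0) (hμ₀ : μ₀ ≠ 0)
    (hx0 : x 0 = 0) (hu0 : u 0 = 0) (hξ0 : ξ 0 = ξ₀) (hμ0 : μ 0 = μ₀)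
    (hHamx : ∀ (t : ℝ) (i : Fin d₁), HasDerivAt (fun s => x s i)
      (deriv (fun a => sqrtHam J (x t) (u t) (update (ξ t) i a) (μ t)) (ξ t i)) t)
    (hHamu : ∀ (t : ℝ) (j : Fin d₂), HasDerivAt (fun s => u s j)
      (deriv (fun a => sqrtHam J (x t) (u t) (ξ t) (update (μ t) j a)) (μ t j)) t)
    (hHamξ : ∀ (t : ℝ) (i : Fin d₁), HasDerivAt (fun s => ξ s i)
      (-(deriv (fun a => sqrtHam J (update (x t) i a) (u t) (ξ t) (μ t)) (x t i))) t)
    (hHamμ : ∀ (t : ℝ) (j : Fin d₂), HasDerivAt (fun s => μ s j)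
      (-(deriv (fun a => sqrtHam J (x t) (update (u t) j a) (ξ t) (μ t)) (u t j))) t) :
    ∀ t : ℝ,
      let nξ := Real.sqrt (ξ₀ ⬝ᵥ ξ₀)
      let nμ := Real.sqrt (μ₀ ⬝ᵥ μ₀)
      let θ := t * nμ / (2 * nξ)
      let ξb := nξ⁻¹ • ξ₀
      let μb := nμ⁻¹ • μ₀
      x t = (t * (Real.sin θ / θ)) •
          (Real.cos θ • ξb + Real.sin θ • (J μb).mulVec ξb) ∧
      ξ t = Real.cos θ • (Real.cos θ • ξ₀ + Real.sin θ • (J μb).mulVec ξ₀) ∧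
      u t = (t ^ 2 / (4 * θ) * (1 - Real.sin θ / θ * Real.cos θ)) • μb := by
  intro t nξ nμ θ ξb μb
  have hF : IsHamiltonFlow J x u ξ μ := ⟨hHamx, hHamu, hHamξ, hHamμ⟩
  have hnξ : 0 < nξ := sqrt_pos.2 (dotProduct_self_pos hξ₀)
  have hnμ : 0 < nμ := sqrt_pos.2 (dotProduct_self_pos hμ₀)
  have hμb : μb ⬝ᵥ μb = 1 := inv_sqrt_smul_dotProduct_self hμ₀
  have hμ0' : μ 0 = nμ • μb := by rw [hμ0, smul_smul, mul_inv_cancel₀ hnμ.ne', one_smul]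
  have hA : J μb * J μb = -1 := by rw [hHtype, hμb, one_smul]
  have hξ0' : ξ 0 ≠ 0 := hξ0 ▸ hξ₀
  have hangle : nμ / √(ξ₀ ⬝ᵥ ξ₀) * t = 2 * θ := by simp only [θ, nξ]; field_simp
  have hx := hF.x_eq hskew hA hμ0' hx0 hξ0' hnμ.ne' t
  have hξ := hF.ξ_eq hskew hA hμ0' hx0 hξ0' hnμ.ne' t
  have hu := hF.u_eq hskew hHtype hμb hμ0' hx0 hu0 hξ0' hnμ.ne' t
  rw [hξ0, hangle] at hx hξ hu
  rcases eq_or_ne t 0 with rfl | ht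
  · simp [θ, hx0, hu0, hξ0]
  have hθ : θ ≠ 0 := by simp only [θ]; positivity
  have ht' : t = 2 * nξ * θ / nμ := by simp only [θ]; field_simp
  simp only [sin_two_mul, cos_two_mul] at hx hξ hu
  refine ⟨?_, ?_, ?_⟩
  · rw [hx, ht', cos_sq']
    simp only [ξb, mulVec_smul, smul_add, smul_smul]
    match_scalars
    · field_simp
    · field_simp
      ring
  · rw [hξ]
    match_scalars <;> ring
  · rw [hu, ht']
    congr 1
    field_simp
    ring
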